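/- Fix κ > 0 and c_φ > 0. Define T(α, α₀) = (α − α₀)/(1 + κ·exp(α + c_φ·e^{−α₀})) for real α₀ < α. Then for all α₀ < α, T(α, α₀) < 1/(e²·κ·c_φ); consequently T_* = sup_{α∈ℝ} sup_{α₀<α} T(α, α₀) is finite. -/
import Mathlib

lemma mul_exp_one_le_exp (s : ℝ) : s * Real.exp 1 ≤ Real.exp s := by
  have h := Real.add_one_le_exp (s - 1)
  have : s ≤ Real.exp (s - 1) := by linarith
  calc s * Real.exp 1 ≤ Real.exp (s - 1) * Real.exp 1 := by
        nlinarith [Real.exp_pos 1, Real.exp_pos (s-1)]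
    _ = Real.exp s := by rw [← Real.exp_add]; ring_nf

theorem existence_time_bounded (κ c : ℝ) (hκ : 0 < κ) (hc : 0 < c) :
    (∀ α₀ α : ℝ, α₀ < α →
      (α - α₀) / (1 + κ * Real.exp (α + c * Real.exp (-α₀))) <
        1 / (Real.exp 1 ^ 2 * κ * c)) ∧
    BddAbove {x : ℝ | ∃ α₀ α : ℝ, α₀ < α ∧
      x = (α - α₀) / (1 + κ * Real.exp (α + c * Real.exp (-α₀)))} := by
  have key : ∀ α₀ α : ℝ, α₀ < α →
      (α - α₀) / (1 + κ * Real.exp (α + c * Real.exp (-α₀))) <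
        1 / (Real.exp 1 ^ 2 * κ * c) := by
    intro α₀ α hlt
    set u := c * Real.exp (-α₀) with hu
    have hu0 : 0 < u := mul_pos hc (Real.exp_pos _)
    have hE : 0 < Real.exp (α + u) := Real.exp_pos _
    have hden : 0 < 1 + κ * Real.exp (α + u) := by positivity
    have hd2 : 0 < Real.exp 1 ^ 2 * κ * c := by positivity
    rw [div_lt_div_iff₀ hden hd2]
    -- main inequality: (α-α₀) * (e^2 κ c) < 1 + κ e^{α+u}
    have h1 : (α - α₀) * Real.exp 1 ≤ Real.exp (α - α₀) := mul_exp_one_le_exp _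
    have h2 : u * Real.exp 1 ≤ Real.exp u := mul_exp_one_le_exp _
    have hc' : c = u * Real.exp α₀ := by
      rw [hu, mul_assoc, ← Real.exp_add]; simp
    have h3 : (α - α₀) * (Real.exp 1 ^ 2 * κ * c) ≤ κ * Real.exp (α + u) := by
      have e1 : Real.exp (α - α₀) * (Real.exp α₀ * Real.exp u) = Real.exp (α + u) := by
        rw [← Real.exp_add, ← Real.exp_add]; ring_nf
      have hA : 0 < Real.exp (α - α₀) := Real.exp_pos _
      have hB : 0 < Real.exp α₀ := Real.exp_pos _
      have := mul_le_mul h1 h2 (by positivity) hA.le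
      calc (α - α₀) * (Real.exp 1 ^ 2 * κ * c)
          = κ * Real.exp α₀ * ((α - α₀) * Real.exp 1 * (u * Real.exp 1)) := by
            rw [hc']; ring
        _ ≤ κ * Real.exp α₀ * (Real.exp (α - α₀) * Real.exp u) := by
            have : 0 < κ * Real.exp α₀ := by positivity
            exact mul_le_mul_of_nonneg_left (by nlinarith) this.le
        _ = κ * Real.exp (α + u) := by rw [← e1]; ring
    calc (α - α₀) * (Real.exp 1 ^ 2 * κ * c) ≤ κ * Real.exp (α + u) := h3
      _ < 1 * (1 + κ * Real.exp (α + u)) := by linarith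
  refine ⟨key, ⟨1 / (Real.exp 1 ^ 2 * κ * c), ?_⟩⟩
  rintro x ⟨α₀, α, hlt, rfl⟩
  exact (key α₀ α hlt).le
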